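/- arXiv:2111.07889 — 2 statements merged into one kernel-verified Lean document; each statement's English description precedes it below -/
import Mathlib

section
/- Sharpness of the moment inequalities: given a joint distribution of ranked outcomes and group statuses (Y, G) with Y = (Y_1,...,Y_J) the outcomes by rank, if E[Y_a − Y_b | G = g] ≥ 0 for all a < b and all g with P(G = g) > 0, then there exists a random variable I (an information set) and a joint distribution of (Y, G, I) with the given marginal for (Y, G), such that the identity ranking maximizes E[Σ_r w_r Y_r | I] almost surely, for any strictly decreasing positive weights (w_r). In particular one can take I = G, since E[Y_r | G] is weakly decreasing in r. -/
/-!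
Take the information to be `G` itself, i.e. `m = σ(G)`. Since `G` is discrete, `E[Y_r | m]` equals,
on each atom `{G = g}` of positive mass, the average `E[Y_r | G = g]`; the hypothesis makes these
averages weakly decreasing in `r`. For a ranking rule `σ` that is `m`-measurable, the events
`{σ r = k}` lie in `m`, so `E[Y_{σ r} | m] = E[Y_k | m]` on `{σ r = k}`. Hence
`E[Σ_r w_r Y_{σ r} | m]` is `Σ_r w_r c_{σ r}` with `c = E[Y_· | m]`, and the rearrangement
inequality for the antitone sequences `w` and `c` bounds it pointwise by `Σ_r w_r c_r`.
-/

open MeasureTheory ProbabilityTheory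

section RandomIndex

variable {Ω ι : Type*} {m mΩ : MeasurableSpace Ω} {μ : Measure Ω} [Fintype ι]

lemma eq_sum_indicator_preimage_singleton {E : Type*} [AddCommMonoid E]
    (τ : Ω → ι) (Y : ι → Ω → E) :
    (fun ω => Y (τ ω) ω) = ∑ i, (τ ⁻¹' {i}).indicator (Y i) := by
  classical
  ext ω
  simp [Set.indicator_apply, eq_comm]

variable [MeasurableSpace ι] [MeasurableSingletonClass ι]

lemma integrable_comp_index {Y : ι → Ω → ℝ} (hY : ∀ i, Integrable (Y i) μ) {τ : Ω → ι}
    (hτ : Measurable τ) : Integrable (fun ω => Y (τ ω) ω) μ := by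
  rw [eq_sum_indicator_preimage_singleton]
  exact integrable_finsetSum' _ fun i _ => (hY i).indicator (hτ (measurableSet_singleton i))

lemma condExp_comp_index (hm : m ≤ mΩ) {Y : ι → Ω → ℝ} (hY : ∀ i, Integrable (Y i) μ)
    {τ : Ω → ι} (hτ : Measurable[m] τ) :
    μ[fun ω => Y (τ ω) ω | m] =ᵐ[μ] fun ω => μ[Y (τ ω) | m] ω := by
  have hmeas : ∀ i, MeasurableSet[m] (τ ⁻¹' {i}) := fun i => hτ (measurableSet_singleton i)
  rw [eq_sum_indicator_preimage_singleton,
    eq_sum_indicator_preimage_singleton τ fun i => μ[Y i | m]]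
  exact (condExp_finsetSum (fun i _ => (hY i).indicator (hm _ (hmeas i))) m).trans
    (eventuallyEq_sum fun i _ => condExp_indicator (hY i) (hmeas i))

end RandomIndex

lemma condExp_sum_const_mul {Ω ι : Type*} {m mΩ : MeasurableSpace Ω} {μ : Measure Ω}
    [Fintype ι] {Z : ι → Ω → ℝ} (hZ : ∀ i, Integrable (Z i) μ) (w : ι → ℝ) :
    μ[fun ω => ∑ i, w i * Z i ω | m] =ᵐ[μ] fun ω => ∑ i, w i * μ[Z i | m] ω := by
  have hsum : (fun ω => ∑ i, w i * Z i ω) = ∑ i, w i • Z i := by ext ω; simp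
  rw [hsum]
  refine (condExp_finsetSum (fun i _ => (hZ i).smul (w i)) m).trans ?_
  filter_upwards [ae_all_iff.2 fun i => condExp_smul (μ := μ) (w i) (Z i) m] with ω hω
  simp [hω]

lemma condExp_sum_comp_perm_le {Ω ι : Type*} {m mΩ : MeasurableSpace Ω} {μ : Measure Ω}
    [Fintype ι] [LinearOrder ι] [MeasurableSpace ι] [MeasurableSingletonClass ι]
    (hm : m ≤ mΩ) {Y : ι → Ω → ℝ} (hY : ∀ i, Integrable (Y i) μ)
    (hanti : ∀ᵐ ω ∂μ, Antitone fun i => μ[Y i | m] ω) {w : ι → ℝ} (hw : Antitone w)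
    (σ : Ω → Equiv.Perm ι) (hσ : ∀ i, Measurable[m] fun ω => σ ω i) :
    ∀ᵐ ω ∂μ, μ[fun ω' => ∑ i, w i * Y (σ ω' i) ω' | m] ω ≤
      μ[fun ω' => ∑ i, w i * Y i ω' | m] ω := by
  have hσY : ∀ i, Integrable (fun ω => Y (σ ω i) ω) μ := fun i =>
    integrable_comp_index hY ((hσ i).mono hm le_rfl)
  filter_upwards [condExp_sum_const_mul hσY w, condExp_sum_const_mul hY w,
    ae_all_iff.2 fun i => condExp_comp_index hm hY (hσ i), hanti] with ω hσ_lin hid_lin hσ_idx hω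
  rw [hσ_lin, hid_lin]
  simp_rw [hσ_idx]
  exact (hw.monovary hω).sum_smul_comp_perm_le_sum_smul

section ComapOfDiscrete

variable {Ω β : Type*} {mΩ : MeasurableSpace Ω} {μ : Measure Ω} [MeasurableSpace β]
  [MeasurableSingletonClass β] {G : Ω → β}

lemma ae_measure_preimage_singleton_ne_zero [Countable β] (hG : Measurable G) :
    ∀ᵐ ω ∂μ, μ (G ⁻¹' {G ω}) ≠ 0 := by
  have h : ∀ᵐ y ∂μ.map G, μ.map G {y} ≠ 0 := ae_iff_of_countable.2 fun _ hy => hy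
  filter_upwards [ae_of_ae_map hG.aemeasurable h] with ω hω
  rwa [Measure.map_apply hG (measurableSet_singleton _)] at hω

lemma condExp_comap_eq_integral_cond [IsFiniteMeasure μ] (hG : Measurable G) {f : Ω → ℝ}
    (hf : Integrable f μ) {ω : Ω} (hω : μ (G ⁻¹' {G ω}) ≠ 0) :
    μ[f | MeasurableSpace.comap G inferInstance] ω = ∫ x, f x ∂μ[|G ⁻¹' {G ω}] := by
  set A := G ⁻¹' {G ω}
  have hA : MeasurableSet[MeasurableSpace.comap G inferInstance] A :=
    ⟨{G ω}, measurableSet_singleton _, rfl⟩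
  -- `μ[f | σ(G)]` is `σ(G)`-measurable everywhere, not just a.e., so it is constant on atoms.
  have hconst : ∀ x ∈ A, μ[f | MeasurableSpace.comap G inferInstance] x =
      μ[f | MeasurableSpace.comap G inferInstance] ω :=
    fun x hx => stronglyMeasurable_condExp.factorsThrough hx
  have hμA : (μ A).toReal ≠ 0 := ENNReal.toReal_ne_zero.2 ⟨hω, measure_ne_top μ A⟩
  have hint := setIntegral_condExp hG.comap_le hf hA
  rw [setIntegral_congr_fun (hG.comap_le A hA) hconst, setIntegral_const, smul_eq_mul] at hint
  rw [ProbabilityTheory.cond, integral_smul_measure, ← hint, ENNReal.toReal_inv, smul_eq_mul,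
    measureReal_def, inv_mul_cancel_left₀ hμA]

end ComapOfDiscrete

lemma ae_antitone_condExp_comap {Ω β ι : Type*} {mΩ : MeasurableSpace Ω} {μ : Measure Ω}
    [IsFiniteMeasure μ] [MeasurableSpace β] [MeasurableSingletonClass β] [Countable β]
    [Preorder ι] {G : Ω → β} (hG : Measurable G) {Y : ι → Ω → ℝ} (hY : ∀ i, Integrable (Y i) μ)
    (hdec : ∀ a b, a ≤ b → ∀ g, 0 < μ (G ⁻¹' {g}) →
      ∫ x, Y b x ∂μ[|G ⁻¹' {g}] ≤ ∫ x, Y a x ∂μ[|G ⁻¹' {g}]) :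
    ∀ᵐ ω ∂μ, Antitone fun i => μ[Y i | MeasurableSpace.comap G inferInstance] ω := by
  filter_upwards [ae_measure_preimage_singleton_ne_zero hG] with ω hω a b hab
  simp only [condExp_comap_eq_integral_cond hG (hY _) hω]
  exact hdec a b hab (G ω) (pos_iff_ne_zero.2 hω)

/-- Sharpness of the moment inequalities. If the outcomes-by-rank Y and
group configuration G (finitely many values) satisfy E[Y_a - Y_b | G = g] ≥ 0 for all
a < b and all g with P(G = g) > 0, then there exists an information σ-algebra m (one can
take the σ-algebra generated by G) under which E[Y_r | m] is a.s. weakly decreasing in r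
and the identity ranking maximizes E[Σ_r w_r Y_{σ(r)} | m] a.s. over all m-measurable
ranking rules, for every strictly decreasing positive weight sequence. -/
theorem stmt8 {Ω : Type*} {mΩ : MeasurableSpace Ω}
    (μ : Measure Ω) [IsProbabilityMeasure μ]
    {J : ℕ} {γty : Type*} [Fintype γty] [MeasurableSpace γty] [MeasurableSingletonClass γty]
    (Y : Fin J → Ω → ℝ) (hY : ∀ r, Integrable (Y r) μ)
    (G : Ω → Fin J → γty) (hGmeas : Measurable G)
    (hineq : ∀ a b : Fin J, a < b → ∀ g : Fin J → γty, 0 < μ {ω | G ω = g} →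
      0 ≤ ∫ ω, (Y a ω - Y b ω) ∂(μ[|{ω | G ω = g}])) :
    ∃ m : MeasurableSpace Ω, m ≤ mΩ ∧ Measurable[m] G ∧
      (∀ a b : Fin J, a ≤ b → ∀ᵐ ω ∂μ, (μ[Y b | m]) ω ≤ (μ[Y a | m]) ω) ∧
      ∀ w : Fin J → ℝ, StrictAnti w → (∀ r, 0 < w r) →
        ∀ σ : Ω → Equiv.Perm (Fin J), (∀ r, Measurable[m] fun ω => σ ω r) →
          ∀ᵐ ω ∂μ, (μ[fun ω' => ∑ r, w r * Y (σ ω' r) ω' | m]) ω ≤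
            (μ[fun ω' => ∑ r, w r * Y r ω' | m]) ω := by
  have hdec : ∀ a b, a ≤ b → ∀ g, 0 < μ (G ⁻¹' {g}) →
      ∫ x, Y b x ∂μ[|G ⁻¹' {g}] ≤ ∫ x, Y a x ∂μ[|G ⁻¹' {g}] := by
    intro a b hab g hg
    obtain hlt | rfl := hab.lt_or_eq
    · have hcond_int : ∀ r, Integrable (Y r) μ[|G ⁻¹' {g}] := fun r =>
        (hY r).restrict.smul_measure (ENNReal.inv_ne_top.2 hg.ne')
      have h : 0 ≤ ∫ x, (Y a x - Y b x) ∂μ[|G ⁻¹' {g}] := hineq a b hlt g hg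
      rw [integral_sub (hcond_int a) (hcond_int b)] at h
      linarith
    · exact le_rfl
  have hanti := ae_antitone_condExp_comap hGmeas hY hdec
  refine ⟨_, hGmeas.comap_le, comap_measurable G, fun a b hab => ?_,
    fun w hw _ σ hσ => condExp_sum_comp_perm_le hGmeas.comap_le hY hanti hw.antitone σ hσ⟩
  filter_upwards [hanti] with ω hω using hω hab
end

section
/- With J = 2 candidates per query, one from each of two groups, unbiased ranking implies exactly two testable inequalities: E[Y_{j(1)} − Y_{j(2)} | woman ranked first] ≥ 0 and E[Y_{j(1)} − Y_{j(2)} | man ranked first] ≥ 0; conversely, if both hold, there exists an information structure rationalizing the observed distribution as unbiased ranking. -/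
/-!
Against any ranking rule `σ`, the identity ranking gains `(w 0 - w 1) * (Y 0 - Y 1)` exactly
where `σ` swaps the two candidates, so its conditional gain given `m` is
`(w 0 - w 1) * 1{σ swaps} * μ[Y 0 - Y 1 | m]`. Necessity: compare with the constant swap and
integrate over the two group events, which are `m`-measurable. Sufficiency: take for `m` the
σ-algebra generated by the group of the first-ranked candidate; the integral of
`μ[Y 0 - Y 1 | m]` over each of its atoms is one of the two testable quantities, so
`μ[Y 0 - Y 1 | m] ≥ 0` almost everywhere.
-/

open MeasureTheory ProbabilityTheory

namespace MeasureTheory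

variable {Ω : Type*} {m mΩ : MeasurableSpace Ω} {μ : Measure Ω}

theorem integral_cond_nonneg_iff [IsFiniteMeasure μ] (s : Set Ω) (g : Ω → ℝ) :
    0 ≤ ∫ x, g x ∂μ[|s] ↔ 0 ≤ ∫ x in s, g x ∂μ := by
  rw [ProbabilityTheory.cond, integral_smul_measure, smul_eq_mul]
  rcases eq_or_ne (μ s) 0 with hs | hs
  · simp [Measure.restrict_eq_zero.mpr hs]
  · have hpos : 0 < (μ s)⁻¹.toReal :=
      ENNReal.toReal_pos (ENNReal.inv_ne_zero.mpr (measure_ne_top μ s))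
        (ENNReal.inv_ne_top.mpr hs)
    exact mul_nonneg_iff_of_pos_left hpos

theorem setIntegral_mono_of_condExp_le (hm : m ≤ mΩ) [SigmaFinite (μ.trim hm)]
    {f g : Ω → ℝ} (hf : Integrable f μ) (hg : Integrable g μ) (hfg : μ[f | m] ≤ᵐ[μ] μ[g | m])
    {s : Set Ω} (hs : MeasurableSet[m] s) : ∫ x in s, f x ∂μ ≤ ∫ x in s, g x ∂μ := by
  rw [← setIntegral_condExp hm hf hs, ← setIntegral_condExp hm hg hs]
  exact setIntegral_mono_ae integrable_condExp.integrableOn integrable_condExp.integrableOn hfg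

theorem condExp_nonneg_of_forall_setIntegral_nonneg (hm : m ≤ mΩ) [SigmaFinite (μ.trim hm)]
    {g : Ω → ℝ} (hg : Integrable g μ)
    (hg_nonneg : ∀ s, MeasurableSet[m] s → 0 ≤ ∫ x in s, g x ∂μ) :
    0 ≤ᵐ[μ] μ[g | m] := by
  refine ae_of_ae_trim hm (ae_nonneg_of_forall_setIntegral_nonneg
    (integrable_condExp.trim hm stronglyMeasurable_condExp) fun s hs _ => ?_)
  rw [← setIntegral_trim hm stronglyMeasurable_condExp hs, setIntegral_condExp hm hg hs]
  exact hg_nonneg s hs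

theorem setIntegral_preimage_nonneg {α : Type*} [Fintype α] [MeasurableSpace α]
    [MeasurableSingletonClass α] {f : Ω → α} (hf : Measurable f) {g : Ω → ℝ}
    (hg : Integrable g μ) (hg_fiber : ∀ a, 0 ≤ ∫ x in f ⁻¹' {a}, g x ∂μ) (t : Set α) :
    0 ≤ ∫ x in f ⁻¹' t, g x ∂μ := by
  classical
  rw [← Set.coe_toFinset t, ← Set.biUnion_preimage_singleton, Finset.set_biUnion_coe,
    integral_biUnion_finset]
  · exact Finset.sum_nonneg fun a _ => hg_fiber a
  · exact fun a _ => hf (measurableSet_singleton a)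
  · exact fun a _ b _ hab => Set.disjoint_singleton.mpr hab |>.preimage f
  · exact fun a _ => hg.integrableOn

theorem condExp_comap_nonneg {α : Type*} [Fintype α] [MeasurableSpace α]
    [MeasurableSingletonClass α] [IsFiniteMeasure μ] {f : Ω → α} (hf : Measurable f)
    {g : Ω → ℝ} (hg : Integrable g μ) (hg_fiber : ∀ a, 0 ≤ ∫ x in f ⁻¹' {a}, g x ∂μ) :
    0 ≤ᵐ[μ] μ[g | MeasurableSpace.comap f inferInstance] :=
  condExp_nonneg_of_forall_setIntegral_nonneg hf.comap_le hg fun _ ⟨t, _, hst⟩ =>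
    hst ▸ setIntegral_preimage_nonneg hf hg hg_fiber t

theorem integrable_sum_mul {ι : Type*} [Fintype ι] (w : ι → ℝ) {Y : ι → Ω → ℝ}
    (hY : ∀ r, Integrable (Y r) μ) : Integrable (fun ω => ∑ r, w r * Y r ω) μ :=
  integrable_finsetSum _ fun r _ => (hY r).const_mul (w r)

end MeasureTheory

theorem Fin.sum_mul_perm_two (w y : Fin 2 → ℝ) (π : Equiv.Perm (Fin 2)) :
    ∑ r, w r * y (π r) =
      ∑ r, w r * y r - if π 0 = 1 then (w 0 - w 1) * (y 0 - y 1) else 0 := by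
  obtain rfl | rfl : π = 1 ∨ π = Equiv.swap 0 1 := by revert π; decide
  · simp
  · simp [Fin.sum_univ_two]
    ring

section Ranking

variable {Ω : Type*} {m mΩ : MeasurableSpace Ω} {μ : Measure Ω}
  {Y : Fin 2 → Ω → ℝ} {w : Fin 2 → ℝ}

theorem setIntegral_sub_nonneg_of_condExp_swap_le [IsFiniteMeasure μ] (hm : m ≤ mΩ)
    (hY : ∀ r, Integrable (Y r) μ) (hw : w 1 < w 0)
    (hswap : ∀ᵐ ω ∂μ, μ[fun ω => ∑ r, w r * Y (Equiv.swap 0 1 r) ω | m] ω ≤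
      μ[fun ω => ∑ r, w r * Y r ω | m] ω)
    {s : Set Ω} (hs : MeasurableSet[m] s) : 0 ≤ ∫ x in s, (Y 0 - Y 1) x ∂μ := by
  have hsum := integrable_sum_mul w hY
  have hmono := setIntegral_mono_of_condExp_le hm (integrable_sum_mul w fun r => hY _) hsum
    hswap hs
  have hswap_eq : (fun ω => ∑ r, w r * Y (Equiv.swap 0 1 r) ω) =
      fun ω => ∑ r, w r * Y r ω - (w 0 - w 1) * (Y 0 - Y 1) ω := by
    ext ω
    simp [Fin.sum_mul_perm_two w (Y · ω)]
  rw [hswap_eq, integral_sub hsum.integrableOn (((hY 0).sub (hY 1)).const_mul _).integrableOn,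
    integral_const_mul] at hmono
  exact nonneg_of_mul_nonneg_right (by linarith) (sub_pos.mpr hw)

theorem condExp_sum_mul_perm_le (hm : m ≤ mΩ) (hY : ∀ r, Integrable (Y r) μ)
    (hD : 0 ≤ᵐ[μ] μ[Y 0 - Y 1 | m]) (hw : w 1 < w 0) {σ : Ω → Equiv.Perm (Fin 2)}
    (hσ : Measurable[m] fun ω => σ ω 0) :
    ∀ᵐ ω ∂μ, μ[fun ω => ∑ r, w r * Y (σ ω r) ω | m] ω ≤
      μ[fun ω => ∑ r, w r * Y r ω | m] ω := by
  set S := {ω | σ ω 0 = 1}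
  have hS : MeasurableSet[m] S := hσ (measurableSet_singleton 1)
  have hgain : Integrable ((w 0 - w 1) • (Y 0 - Y 1)) μ := ((hY 0).sub (hY 1)).smul _
  have hsplit : (fun ω => ∑ r, w r * Y (σ ω r) ω) =
      (fun ω => ∑ r, w r * Y r ω) - S.indicator ((w 0 - w 1) • (Y 0 - Y 1)) := by
    ext ω
    simp [Fin.sum_mul_perm_two w (Y · ω), Set.indicator_apply, S]
  rw [hsplit]
  filter_upwards [condExp_sub (integrable_sum_mul w hY) (hgain.indicator (hm S hS)) m,
    condExp_indicator hgain hS, condExp_smul (w 0 - w 1) (Y 0 - Y 1) m, hD]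
    with ω hsub hind hsmul hDω
  rw [hsub, Pi.sub_apply, hind, sub_le_self_iff]
  refine Set.indicator_apply_nonneg fun _ => ?_
  rw [hsmul, Pi.smul_apply, smul_eq_mul]
  exact mul_nonneg (sub_pos.mpr hw).le hDω

end Ranking

theorem stmt14_general {Ω : Type*} {mΩ : MeasurableSpace Ω}
    (μ : Measure Ω) [IsProbabilityMeasure μ]
    (Y : Fin 2 → Ω → ℝ) (hY : ∀ r, Integrable (Y r) μ)
    (Grank : Ω → Fin 2 → Bool) (honeEach : ∀ ω, Grank ω 0 ≠ Grank ω 1)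
    (hGmeas : Measurable Grank) :
    (∃ m : MeasurableSpace Ω, m ≤ mΩ ∧ Measurable[m] Grank ∧
        ∀ w : Fin 2 → ℝ, StrictAnti w → (∀ r, 0 < w r) →
          ∀ σ : Ω → Equiv.Perm (Fin 2), (∀ r, Measurable[m] fun ω => σ ω r) →
            ∀ᵐ ω ∂μ, (μ[fun ω' => ∑ r, w r * Y (σ ω' r) ω' | m]) ω ≤
              (μ[fun ω' => ∑ r, w r * Y r ω' | m]) ω) ↔
      (0 ≤ ∫ ω, (Y 0 ω - Y 1 ω) ∂(μ[|{ω | Grank ω 0 = true}]) ∧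
        0 ≤ ∫ ω, (Y 0 ω - Y 1 ω) ∂(μ[|{ω | Grank ω 0 = false}])) := by
  set G₀ := fun ω => Grank ω 0
  have hG₀ : Measurable G₀ := (measurable_pi_apply 0).comp hGmeas
  have hfiber : ∀ b, {ω | Grank ω 0 = b} = G₀ ⁻¹' {b} := fun _ => rfl
  simp only [integral_cond_nonneg_iff, hfiber]
  constructor
  · rintro ⟨m, hm, hGm, hopt⟩
    have hswap := hopt ![2, 1] (by simp [StrictAnti, Fin.forall_fin_two])
      (by simp [Fin.forall_fin_two]) (fun _ => Equiv.swap 0 1) fun _ => measurable_const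
    have hs b : MeasurableSet[m] (G₀ ⁻¹' {b}) :=
      (measurable_pi_apply 0).comp hGm (measurableSet_singleton b)
    exact ⟨setIntegral_sub_nonneg_of_condExp_swap_le hm hY (by simp) hswap (hs true),
      setIntegral_sub_nonneg_of_condExp_swap_le hm hY (by simp) hswap (hs false)⟩
  · rintro ⟨htrue, hfalse⟩
    refine ⟨MeasurableSpace.comap G₀ inferInstance, hG₀.comap_le, ?_,
      fun w hw _ σ hσ => condExp_sum_mul_perm_le hG₀.comap_le hY ?_ (hw Fin.zero_lt_one) (hσ 0)⟩
    · have hG : Grank = (fun b r => if r = 0 then b else !b) ∘ G₀ := by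
        ext ω r
        fin_cases r
        · rfl
        · exact Bool.eq_not.mpr (honeEach ω).symm
      rw [hG]
      exact measurable_from_top.comp (comap_measurable G₀)
    · exact condExp_comap_nonneg hG₀ ((hY 0).sub (hY 1)) (Bool.forall_bool.mpr ⟨hfalse, htrue⟩)

/-- J = 2 candidates per query, one woman and one man. Here Y r is the
outcome of the candidate in rank r (r = 0 is first) and `Grank ω r = true` iff the
candidate in rank r is a woman; exactly one candidate of each group per query. The
observed ranking can be rationalized as unbiased (∃ information σ-algebra m containing
the group information under which the realized (identity) ranking maximizes the
conditional weighted objective a.s. over m-measurable ranking rules, for all strictly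
decreasing positive weights) if and only if the two testable inequalities hold:
E[Y₁ - Y₂ | woman ranked first] ≥ 0 and E[Y₁ - Y₂ | man ranked first] ≥ 0. -/
theorem stmt14 {Ω : Type*} {mΩ : MeasurableSpace Ω}
    (μ : Measure Ω) [IsProbabilityMeasure μ]
    (Y : Fin 2 → Ω → ℝ) (hY : ∀ r, Integrable (Y r) μ)
    (Grank : Ω → Fin 2 → Bool) (honeEach : ∀ ω, Grank ω 0 ≠ Grank ω 1)
    (hGmeas : Measurable Grank)
    (h0 : 0 < μ {ω | Grank ω 0 = true}) (h1 : 0 < μ {ω | Grank ω 0 = false}) :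
    (∃ m : MeasurableSpace Ω, m ≤ mΩ ∧ Measurable[m] Grank ∧
        ∀ w : Fin 2 → ℝ, StrictAnti w → (∀ r, 0 < w r) →
          ∀ σ : Ω → Equiv.Perm (Fin 2), (∀ r, Measurable[m] fun ω => σ ω r) →
            ∀ᵐ ω ∂μ, (μ[fun ω' => ∑ r, w r * Y (σ ω' r) ω' | m]) ω ≤
              (μ[fun ω' => ∑ r, w r * Y r ω' | m]) ω) ↔
      (0 ≤ ∫ ω, (Y 0 ω - Y 1 ω) ∂(μ[|{ω | Grank ω 0 = true}]) ∧
        0 ≤ ∫ ω, (Y 0 ω - Y 1 ω) ∂(μ[|{ω | Grank ω 0 = false}])) :=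
  stmt14_general μ Y hY Grank honeEach hGmeas
end
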